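/- The magic capacity C_M(|ψ⟩) vanishes if and only if |ψ⟩ is a pure stabilizer state. -/

import Mathlib

open Matrix BigOperators
open scoped ComplexOrder

/-- The four single-qubit Pauli matrices `I, σx, σy, σz`. -/
noncomputable def pauli : Fin 4 → Matrix (Fin 2) (Fin 2) ℂ :=
  ![1, !![0, 1; 1, 0], !![0, -Complex.I; Complex.I, 0], !![1, 0; 0, -1]]

/-- The `N`-qubit Pauli string `⊗_k σ_{s k}` as a matrix on `(ℂ²)^⊗N`. -/
noncomputable def PauliString {N : ℕ} (s : Fin N → Fin 4) :
    Matrix (Fin N → Fin 2) (Fin N → Fin 2) ℂ :=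
  Matrix.of fun i j => ∏ k, pauli (s k) (i k) (j k)

/-- The Pauli expectation value `⟨ψ|P|ψ⟩` (a real number since `P` is Hermitian). -/
noncomputable def expec {N : ℕ} (ψ : (Fin N → Fin 2) → ℂ) (s : Fin N → Fin 4) : ℝ :=
  (star ψ ⬝ᵥ PauliString s *ᵥ ψ).re

/-- The magic capacity `C_M(|ψ⟩) = Var_{P∼p}(ln ⟨ψ|P|ψ⟩²)` with `p(P) = 2^{-N}⟨ψ|P|ψ⟩²`. -/
noncomputable def magicCapacity {N : ℕ} (ψ : (Fin N → Fin 2) → ℂ) : ℝ :=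
  (2 : ℝ) ^ (-(N : ℤ)) *
      ∑ s : Fin N → Fin 4, expec ψ s ^ 2 * Real.log (expec ψ s ^ 2) ^ 2
    - ((2 : ℝ) ^ (-(N : ℤ)) *
        ∑ s : Fin N → Fin 4, expec ψ s ^ 2 * Real.log (expec ψ s ^ 2)) ^ 2

/-- A pure stabilizer state: all squared Pauli expectations are `0` or `1`, and exactly
`2^N` Pauli strings have expectation `±1`. -/
def IsStabilizerState {N : ℕ} (ψ : (Fin N → Fin 2) → ℂ) : Prop :=
  (∀ s : Fin N → Fin 4, expec ψ s ^ 2 = 0 ∨ expec ψ s ^ 2 = 1) ∧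
  (Finset.univ.filter fun s : Fin N → Fin 4 => expec ψ s ^ 2 = 1).card = 2 ^ N

lemma pauli_conj (a : Fin 4) (i j : Fin 2) :
    starRingEnd ℂ (pauli a i j) = pauli a j i := by
  fin_cases a <;> fin_cases i <;> fin_cases j <;>
    simp [pauli, Matrix.one_apply]

lemma pauli_orth (i j k l : Fin 2) :
    ∑ a : Fin 4, pauli a i j * starRingEnd ℂ (pauli a k l) =
      if i = k ∧ j = l then 2 else 0 := by
  fin_cases i <;> fin_cases j <;> fin_cases k <;> fin_cases l <;>
    norm_num [pauli, Fin.sum_univ_four, Matrix.one_apply, Complex.ext_iff, Matrix.cons_val_two, Matrix.cons_val_three]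

lemma pauliString_conj {N : ℕ} (s : Fin N → Fin 4) (i j : Fin N → Fin 2) :
    starRingEnd ℂ (PauliString s i j) = PauliString s j i := by
  simp [PauliString, map_prod, pauli_conj]

lemma pauliString_orth {N : ℕ} (i j k l : Fin N → Fin 2) :
    ∑ s : Fin N → Fin 4, PauliString s i j * starRingEnd ℂ (PauliString s k l) =
      if i = k ∧ j = l then (2 : ℂ) ^ N else 0 := by
  have h1 : ∀ s : Fin N → Fin 4,
      PauliString s i j * starRingEnd ℂ (PauliString s k l) =
        ∏ m, (pauli (s m) (i m) (j m) * starRingEnd ℂ (pauli (s m) (k m) (l m))) := by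
    intro s
    simp [PauliString, map_prod, Finset.prod_mul_distrib]
  simp_rw [h1]
  rw [← Fintype.piFinset_univ,
    ← Finset.prod_univ_sum (fun _ : Fin N => (Finset.univ : Finset (Fin 4)))
      (fun m a => pauli a (i m) (j m) * starRingEnd ℂ (pauli a (k m) (l m)))]
  simp_rw [pauli_orth]
  by_cases h : i = k ∧ j = l
  · obtain ⟨h1, h2⟩ := h
    subst h1; subst h2
    simp
  · rw [if_neg h]
    rw [Decidable.not_and_iff_or_not] at h
    have : ∃ m, ¬ (i m = k m ∧ j m = l m) := by
      rcases h with h | h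
      · obtain ⟨m, hm⟩ := Function.ne_iff.1 h; exact ⟨m, fun hc => hm hc.1⟩
      · obtain ⟨m, hm⟩ := Function.ne_iff.1 h; exact ⟨m, fun hc => hm hc.2⟩
    obtain ⟨m, hm⟩ := this
    exact Finset.prod_eq_zero (Finset.mem_univ m) (if_neg hm)

lemma pauliString_identity {N : ℕ} : PauliString (fun _ : Fin N => 0) = 1 := by
  ext i j
  simp only [PauliString, Matrix.of_apply]
  show (∏ k, pauli 0 (i k) (j k)) = (1 : Matrix (Fin N → Fin 2) (Fin N → Fin 2) ℂ) i j
  simp only [pauli, Matrix.cons_val_zero]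
  simp_rw [Matrix.one_apply]
  by_cases h : i = j
  · subst h; simp
  · rw [if_neg h]
    obtain ⟨m, hm⟩ := Function.ne_iff.1 h
    exact Finset.prod_eq_zero (Finset.mem_univ m) (if_neg hm)

lemma z_expand {N : ℕ} (ψ : (Fin N → Fin 2) → ℂ) (s : Fin N → Fin 4) :
    star ψ ⬝ᵥ PauliString s *ᵥ ψ =
      ∑ p : (Fin N → Fin 2) × (Fin N → Fin 2),
        (starRingEnd ℂ (ψ p.1) * ψ p.2) * PauliString s p.1 p.2 := by
  rw [Fintype.sum_prod_type]
  simp [dotProduct, mulVec, Finset.mul_sum]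
  congr 1; ext i; congr 1; ext j; ring

lemma z_real {N : ℕ} (ψ : (Fin N → Fin 2) → ℂ) (s : Fin N → Fin 4) :
    starRingEnd ℂ (star ψ ⬝ᵥ PauliString s *ᵥ ψ) = star ψ ⬝ᵥ PauliString s *ᵥ ψ := by
  rw [z_expand, map_sum]
  rw [← Equiv.sum_comp (Equiv.prodComm _ _)]
  apply Finset.sum_congr rfl
  rintro ⟨i, j⟩ -
  simp only [Equiv.prodComm_apply, Prod.swap_prod_mk, _root_.map_mul, Complex.conj_conj,
    pauliString_conj]
  ring

lemma sum_z_sq {N : ℕ} (ψ : (Fin N → Fin 2) → ℂ) (hψ : star ψ ⬝ᵥ ψ = 1) :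
    ∑ s : Fin N → Fin 4,
      (star ψ ⬝ᵥ PauliString s *ᵥ ψ) * starRingEnd ℂ (star ψ ⬝ᵥ PauliString s *ᵥ ψ)
      = (2 : ℂ) ^ N := by
  classical
  set β := (Fin N → Fin 2) × (Fin N → Fin 2)
  set A : β → ℂ := fun p => starRingEnd ℂ (ψ p.1) * ψ p.2 with hA
  have h1 : ∀ s : Fin N → Fin 4,
      (star ψ ⬝ᵥ PauliString s *ᵥ ψ) * starRingEnd ℂ (star ψ ⬝ᵥ PauliString s *ᵥ ψ)
      = ∑ p : β, ∑ q : β, (A p * starRingEnd ℂ (A q)) *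
          (PauliString s p.1 p.2 * starRingEnd ℂ (PauliString s q.1 q.2)) := by
    intro s
    rw [z_expand, map_sum, Finset.sum_mul_sum]
    apply Finset.sum_congr rfl; intro p _
    apply Finset.sum_congr rfl; intro q _
    simp only [_root_.map_mul, hA]
    ring
  simp_rw [h1]
  rw [Finset.sum_comm]
  have h2 : ∀ p : β, ∑ s : Fin N → Fin 4, ∑ q : β, (A p * starRingEnd ℂ (A q)) *
      (PauliString s p.1 p.2 * starRingEnd ℂ (PauliString s q.1 q.2))
      = A p * starRingEnd ℂ (A p) * 2 ^ N := by
    intro p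
    rw [Finset.sum_comm]
    have h3 : ∀ q : β, ∑ s : Fin N → Fin 4, (A p * starRingEnd ℂ (A q)) *
        (PauliString s p.1 p.2 * starRingEnd ℂ (PauliString s q.1 q.2))
        = (A p * starRingEnd ℂ (A q)) * (if p.1 = q.1 ∧ p.2 = q.2 then (2:ℂ)^N else 0) := by
      intro q
      rw [← Finset.mul_sum, pauliString_orth]
    simp_rw [h3]
    rw [Finset.sum_eq_single p]
    · simp
    · intro q _ hq
      rw [if_neg, mul_zero]
      intro hc; exact hq (Prod.ext hc.1.symm hc.2.symm)
    · intro h; exact absurd (Finset.mem_univ p) h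
  simp_rw [h2]
  rw [← Finset.sum_mul]
  have h4 : ∑ p : β, A p * starRingEnd ℂ (A p) = 1 := by
    rw [Fintype.sum_prod_type]
    have : ∀ i j, A (i, j) * starRingEnd ℂ (A (i, j))
        = (starRingEnd ℂ (ψ i) * ψ i) * (starRingEnd ℂ (ψ j) * ψ j) := by
      intro i j; simp only [hA, _root_.map_mul, Complex.conj_conj]; ring
    simp_rw [this]
    have hd : ∑ i, starRingEnd ℂ (ψ i) * ψ i = 1 := by
      simpa [dotProduct] using hψ
    rw [← Finset.sum_mul_sum, hd]; norm_num
  rw [h4, one_mul]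

lemma sum_expec_sq {N : ℕ} (ψ : (Fin N → Fin 2) → ℂ) (hψ : star ψ ⬝ᵥ ψ = 1) :
    ∑ s : Fin N → Fin 4, expec ψ s ^ 2 = 2 ^ N := by
  have key := sum_z_sq ψ hψ
  have h1 : ∀ s : Fin N → Fin 4,
      (star ψ ⬝ᵥ PauliString s *ᵥ ψ) * starRingEnd ℂ (star ψ ⬝ᵥ PauliString s *ᵥ ψ)
      = ((expec ψ s ^ 2 : ℝ) : ℂ) := by
    intro s
    have hr := z_real ψ s
    set z := star ψ ⬝ᵥ PauliString s *ᵥ ψ with hz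
    have him : z.im = 0 := by
      have := congrArg Complex.im hr
      simp only [Complex.conj_im] at this
      linarith
    rw [Complex.mul_conj]
    rw [expec, ← hz]
    rw [Complex.normSq_apply, him]
    push_cast
    ring
  rw [Finset.sum_congr rfl (fun s _ => h1 s), ← Complex.ofReal_sum] at key
  have h2 : ((2:ℂ)^N) = ((2:ℝ)^N : ℝ) := by push_cast; ring
  exact Complex.ofReal_injective (key.trans h2)

lemma expec_identity {N : ℕ} (ψ : (Fin N → Fin 2) → ℂ) (hψ : star ψ ⬝ᵥ ψ = 1) :
    expec ψ (fun _ : Fin N => 0) = 1 := by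
  rw [expec, pauliString_identity, Matrix.one_mulVec, hψ]
  simp

/-- The magic capacity vanishes if and only if `|ψ⟩` is a pure stabilizer state. -/
theorem magicCapacity_eq_zero_iff_stabilizer {N : ℕ} (ψ : (Fin N → Fin 2) → ℂ)
    (hψ : star ψ ⬝ᵥ ψ = 1) :
    magicCapacity ψ = 0 ↔ IsStabilizerState ψ := by
  have hsum : ∑ s : Fin N → Fin 4, expec ψ s ^ 2 = 2 ^ N := sum_expec_sq ψ hψ
  have hI : expec ψ (fun _ : Fin N => 0) ^ 2 = 1 := by
    rw [expec_identity ψ hψ]; norm_num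
  have hc0 : (0:ℝ) < (2:ℝ) ^ (-(N:ℤ)) := by positivity
  have hcM : (2:ℝ) ^ (-(N:ℤ)) * (2:ℝ) ^ N = 1 := by
    rw [_root_.zpow_neg, zpow_natCast]
    exact inv_mul_cancel₀ (by positivity)
  constructor
  · intro h
    unfold magicCapacity at h
    set c := (2:ℝ) ^ (-(N:ℤ)) with hc
    set Q := ∑ s : Fin N → Fin 4, expec ψ s ^ 2 * Real.log (expec ψ s ^ 2) ^ 2 with hQ
    set S := ∑ s : Fin N → Fin 4, expec ψ s ^ 2 * Real.log (expec ψ s ^ 2) with hS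
    set μ := c * S with hμ
    have key : ∑ s : Fin N → Fin 4,
        expec ψ s ^ 2 * (Real.log (expec ψ s ^ 2) - μ) ^ 2 = 0 := by
      have expand : ∀ s : Fin N → Fin 4,
          expec ψ s ^ 2 * (Real.log (expec ψ s ^ 2) - μ) ^ 2 =
            expec ψ s ^ 2 * Real.log (expec ψ s ^ 2) ^ 2
            - 2 * μ * (expec ψ s ^ 2 * Real.log (expec ψ s ^ 2))
            + μ ^ 2 * expec ψ s ^ 2 := by
        intro s; ring
      rw [Finset.sum_congr rfl fun s _ => expand s]
      rw [Finset.sum_add_distrib, Finset.sum_sub_distrib, ← Finset.mul_sum,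
        ← Finset.mul_sum, hsum, ← hQ, ← hS]
      have hc' : c ≠ 0 := ne_of_gt hc0
      have hmul : c * (Q - 2 * μ * S + μ ^ 2 * 2 ^ N) = 0 := by
        calc c * (Q - 2 * μ * S + μ ^ 2 * 2 ^ N)
            = c * Q - 2 * μ * (c * S) + μ ^ 2 * (c * 2 ^ N) := by ring
          _ = c * Q - 2 * μ * μ + μ ^ 2 * 1 := by rw [← hμ, hcM]
          _ = c * Q - μ ^ 2 := by ring
          _ = 0 := h
      exact (mul_eq_zero.1 hmul).resolve_left hc'
    have hterm : ∀ s ∈ (Finset.univ : Finset (Fin N → Fin 4)),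
        expec ψ s ^ 2 * (Real.log (expec ψ s ^ 2) - μ) ^ 2 = 0 :=
      (Finset.sum_eq_zero_iff_of_nonneg (fun s _ => by positivity)).1 key
    have hμ0 : μ = 0 := by
      have h0 := hterm _ (Finset.mem_univ (fun _ : Fin N => 0))
      rw [hI, Real.log_one, one_mul] at h0
      have := pow_eq_zero_iff (two_ne_zero) |>.1 h0
      linarith
    have h01 : ∀ s : Fin N → Fin 4, expec ψ s ^ 2 = 0 ∨ expec ψ s ^ 2 = 1 := by
      intro s
      have hs := hterm s (Finset.mem_univ s)
      rw [hμ0, sub_zero] at hs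
      rcases mul_eq_zero.1 hs with h' | h'
      · exact Or.inl h'
      · have hlog : Real.log (expec ψ s ^ 2) = 0 :=
          pow_eq_zero_iff (two_ne_zero) |>.1 h'
        rcases Real.log_eq_zero.1 hlog with h0 | h1 | hm1
        · exact Or.inl h0
        · exact Or.inr h1
        · exfalso; have := sq_nonneg (expec ψ s); rw [hm1] at this; linarith
    refine ⟨h01, ?_⟩
    have hsplit : ∑ s ∈ Finset.univ.filter
        (fun s : Fin N → Fin 4 => expec ψ s ^ 2 = 1), expec ψ s ^ 2
        = ∑ s : Fin N → Fin 4, expec ψ s ^ 2 :=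
      Finset.sum_filter_of_ne (fun s _ hne => (h01 s).resolve_left hne)
    have hone : ∑ s ∈ Finset.univ.filter
        (fun s : Fin N → Fin 4 => expec ψ s ^ 2 = 1), expec ψ s ^ 2
        = ((Finset.univ.filter
          (fun s : Fin N → Fin 4 => expec ψ s ^ 2 = 1)).card : ℝ) := by
      rw [Finset.sum_congr rfl (fun s hs => (Finset.mem_filter.1 hs).2)]
      simp
    have : ((Finset.univ.filter
        (fun s : Fin N → Fin 4 => expec ψ s ^ 2 = 1)).card : ℝ) = ((2 ^ N : ℕ) : ℝ) := by
      rw [← hone, hsplit, hsum]; push_cast; ring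
    exact_mod_cast this
  · rintro ⟨h01, -⟩
    have t1 : ∀ s : Fin N → Fin 4,
        expec ψ s ^ 2 * Real.log (expec ψ s ^ 2) ^ 2 = 0 := by
      intro s; rcases h01 s with h | h <;> rw [h] <;> simp
    have t2 : ∀ s : Fin N → Fin 4,
        expec ψ s ^ 2 * Real.log (expec ψ s ^ 2) = 0 := by
      intro s; rcases h01 s with h | h <;> rw [h] <;> simp
    unfold magicCapacity
    rw [Finset.sum_eq_zero (fun s _ => t1 s), Finset.sum_eq_zero (fun s _ => t2 s)]
    ring
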